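/- arXiv:1310.0506 — 8 statements merged into one kernel-verified Lean document; each statement's English description precedes it below -/
import Mathlib

section
/- The product of two polynomials with nonnegative log-concave coefficient sequences having no internal zeros is again a polynomial with nonnegative log-concave coefficient sequence with no internal zeros. -/
open Polynomial

/-- `P` has nonnegative coefficients. -/
def NonnegCoeffs (P : Polynomial ℝ) : Prop := ∀ k, 0 ≤ P.coeff k

/-- The coefficient sequence of `P` is log-concave. -/
def LogConcaveCoeffs (P : Polynomial ℝ) : Prop :=
  ∀ k, 1 ≤ k → P.coeff (k - 1) * P.coeff (k + 1) ≤ (P.coeff k) ^ 2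

/-- The coefficient sequence of `P` has no internal zeros: the indices of nonzero
coefficients form a set of consecutive integers. -/
def NoInternalZeros (P : Polynomial ℝ) : Prop :=
  ∀ i j l, i ≤ j → j ≤ l → P.coeff i ≠ 0 → P.coeff l ≠ 0 → P.coeff j ≠ 0

/-!
Extend the coefficient sequences by zero to `ℤ`. Nonnegativity, log-concavity and the absence of
internal zeros give the strong form `a (i - 1) * a (j + 1) ≤ a i * a j` for all `i ≤ j`. For the
product `c = a * b`, both `c (n - 1) * c (n + 1)` and `c n ^ 2` are products of two convolution sums
over a common window, and their difference is a sum, over pairs `j < j'`, of a `2 × 2` minor of `a`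
times a minor of `b` of the opposite sign. The support of a product of polynomials with nonnegative
coefficients is the sumset of the supports, and a sumset of intervals is an interval.
-/

open Finset

theorem Finset.sum_mul_sum_le_sum_mul_sum_of_minors {ι R : Type*} [LinearOrder ι] [CommRing R]
    [LinearOrder R] [IsStrictOrderedRing R] (s : Finset ι) (x y z w : ι → R)
    (hxy : ∀ i j, i < j → x i * y j ≤ x j * y i) (hzw : ∀ i j, i < j → z j * w i ≤ z i * w j) :
    (∑ i ∈ s, x i * z i) * (∑ i ∈ s, y i * w i) ≤
      (∑ i ∈ s, x i * w i) * (∑ i ∈ s, y i * z i) := by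
  set d : ι → ι → R := fun i j => x i * z i * (y j * w j) - x i * w i * (y j * z j)
  have hminor : ∀ i j, d i j + d j i ≤ 0 := by
    intro i j
    have hd : d i j + d j i = (x i * y j - x j * y i) * (z i * w j - z j * w i) := by ring
    rw [hd]
    rcases lt_trichotomy i j with h | rfl | h
    · exact mul_nonpos_of_nonpos_of_nonneg (sub_nonpos.2 (hxy i j h)) (sub_nonneg.2 (hzw i j h))
    · simp
    · rw [← neg_mul_neg, neg_sub, neg_sub]
      exact mul_nonpos_of_nonpos_of_nonneg (sub_nonpos.2 (hxy j i h)) (sub_nonneg.2 (hzw j i h))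
  have hsum : 2 * ∑ i ∈ s, ∑ j ∈ s, d i j = ∑ i ∈ s, ∑ j ∈ s, (d i j + d j i) := by
    simp only [sum_add_distrib, sum_comm (f := fun i j => d j i)]
    ring
  have hdiff : ∑ i ∈ s, ∑ j ∈ s, d i j = (∑ i ∈ s, x i * z i) * (∑ i ∈ s, y i * w i) -
      (∑ i ∈ s, x i * w i) * (∑ i ∈ s, y i * z i) := by
    simp only [d, sum_sub_distrib, sum_mul_sum]
  have : ∑ i ∈ s, ∑ j ∈ s, (d i j + d j i) ≤ 0 :=
    sum_nonpos fun i _ => sum_nonpos fun j _ => hminor i j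
  linarith

theorem mul_le_mul_of_logConcave {a : ℤ → ℝ} (h0 : ∀ i, 0 ≤ a i)
    (hlc : ∀ i, a (i - 1) * a (i + 1) ≤ a i ^ 2)
    (hz : ∀ i j l, i ≤ j → j ≤ l → a i ≠ 0 → a l ≠ 0 → a j ≠ 0) {i j : ℤ} (hij : i ≤ j) :
    a (i - 1) * a (j + 1) ≤ a i * a j := by
  induction j, hij using Int.leInduction with
  | base => simpa [sq] using hlc i
  | succ j hij ih =>
    by_cases hzero : a (i - 1) * a (j + 1 + 1) = 0
    · exact hzero ▸ mul_nonneg (h0 _) (h0 _)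
    obtain ⟨hi, hj2⟩ := mul_ne_zero_iff.1 hzero
    have hj : 0 < a j := (h0 j).lt_of_ne' (hz _ _ _ (by omega) (by omega) hi hj2)
    have hlc' : a j * a (j + 1 + 1) ≤ a (j + 1) ^ 2 := by simpa using hlc (j + 1)
    refine le_of_mul_le_mul_right ?_ hj
    calc a (i - 1) * a (j + 1 + 1) * a j = a (i - 1) * (a j * a (j + 1 + 1)) := by ring
      _ ≤ a (i - 1) * a (j + 1) ^ 2 := mul_le_mul_of_nonneg_left hlc' (h0 _)
      _ = a (j + 1) * (a (i - 1) * a (j + 1)) := by ring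
      _ ≤ a (j + 1) * (a i * a j) := mul_le_mul_of_nonneg_left ih (h0 _)
      _ = a i * a (j + 1) * a j := by ring

namespace Polynomial

-- Coefficients extended by zero to negative indices, so that convolution windows can be shifted.
noncomputable def coeffInt (P : ℝ[X]) (i : ℤ) : ℝ := if 0 ≤ i then P.coeff i.toNat else 0

theorem coeffInt_of_nonneg (P : ℝ[X]) {i : ℤ} (hi : 0 ≤ i) : P.coeffInt i = P.coeff i.toNat :=
  if_pos hi

theorem coeffInt_of_neg (P : ℝ[X]) {i : ℤ} (hi : i < 0) : P.coeffInt i = 0 :=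
  if_neg hi.not_ge

@[simp, norm_cast]
theorem coeffInt_natCast (P : ℝ[X]) (n : ℕ) : P.coeffInt n = P.coeff n := by
  simp [coeffInt]

theorem coeffInt_mul (P Q : ℝ[X]) (m n : ℤ) {s : Finset ℤ} (hs : Icc (-m) n ⊆ s) :
    (P * Q).coeffInt (m + n) = ∑ j ∈ s, P.coeffInt (m + j) * Q.coeffInt (n - j) := by
  rw [← sum_subset hs fun j _ hj => ?vanish]
  case vanish =>
    have : m + j < 0 ∨ n - j < 0 := by rw [mem_Icc] at hj; omega
    rcases this with h | h <;> simp [coeffInt_of_neg _ h]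
  rcases lt_or_ge (m + n) 0 with hmn | hmn
  · rw [coeffInt_of_neg _ hmn, Icc_eq_empty (by omega), sum_empty]
  obtain ⟨N, hN⟩ : ∃ N : ℕ, m + n = N := ⟨(m + n).toNat, by omega⟩
  rw [hN, coeffInt_natCast, coeff_mul]
  refine (sum_nbij' (fun j => ((m + j).toNat, (n - j).toNat)) (fun p => (p.1 : ℤ) - m)
    ?_ ?_ ?_ ?_ ?_).symm
  · intro j hj
    rw [mem_Icc] at hj
    rw [HasAntidiagonal.mem_antidiagonal]
    omega
  · intro p hp
    rw [HasAntidiagonal.mem_antidiagonal] at hp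
    rw [mem_Icc]
    omega
  · intro j hj
    rw [mem_Icc] at hj
    omega
  · intro p hp
    rw [HasAntidiagonal.mem_antidiagonal] at hp
    ext <;> simp only <;> omega
  · intro j hj
    rw [mem_Icc] at hj
    rw [coeffInt_of_nonneg _ (by omega), coeffInt_of_nonneg _ (by omega)]

end Polynomial

theorem NonnegCoeffs.coeffInt_nonneg {P : ℝ[X]} (h : NonnegCoeffs P) (i : ℤ) :
    0 ≤ P.coeffInt i := by
  unfold Polynomial.coeffInt
  split_ifs
  exacts [h _, le_rfl]

theorem logConcaveCoeffs_iff_coeffInt {P : ℝ[X]} : LogConcaveCoeffs P ↔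
    ∀ i : ℤ, P.coeffInt (i - 1) * P.coeffInt (i + 1) ≤ P.coeffInt i ^ 2 := by
  constructor
  · intro h i
    rcases lt_or_ge i 1 with hi | hi
    · rw [coeffInt_of_neg P (by omega : i - 1 < 0), zero_mul]
      positivity
    · obtain ⟨k, rfl⟩ : ∃ k : ℕ, i = k + 1 := ⟨(i - 1).toNat, by omega⟩
      rw [add_sub_cancel_right]
      exact_mod_cast h (k + 1) (by omega)
  · intro h k hk
    obtain ⟨n, rfl⟩ : ∃ n, k = n + 1 := ⟨k - 1, by omega⟩
    have := h (n + 1)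
    rw [add_sub_cancel_right] at this
    exact_mod_cast this

theorem NoInternalZeros.coeffInt_ne_zero {P : ℝ[X]} (h : NoInternalZeros P) (i j l : ℤ)
    (hij : i ≤ j) (hjl : j ≤ l) (hi : P.coeffInt i ≠ 0) (hl : P.coeffInt l ≠ 0) :
    P.coeffInt j ≠ 0 := by
  have h0 : 0 ≤ i := by
    by_contra! hneg
    exact hi (P.coeffInt_of_neg hneg)
  lift i to ℕ using h0
  lift j to ℕ using (by omega)
  lift l to ℕ using (by omega)
  simp only [coeffInt_natCast] at *
  exact h i j l (by omega) (by omega) hi hl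

theorem LogConcaveCoeffs.mul {P Q : ℝ[X]} (hP1 : NonnegCoeffs P) (hP2 : LogConcaveCoeffs P)
    (hP3 : NoInternalZeros P) (hQ1 : NonnegCoeffs Q) (hQ2 : LogConcaveCoeffs Q)
    (hQ3 : NoInternalZeros Q) : LogConcaveCoeffs (P * Q) := by
  rw [logConcaveCoeffs_iff_coeffInt]
  intro n
  have hA {i j : ℤ} (hij : i ≤ j) :=
    mul_le_mul_of_logConcave hP1.coeffInt_nonneg (logConcaveCoeffs_iff_coeffInt.1 hP2)
      hP3.coeffInt_ne_zero hij
  have hB {i j : ℤ} (hij : i ≤ j) :=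
    mul_le_mul_of_logConcave hQ1.coeffInt_nonneg (logConcaveCoeffs_iff_coeffInt.1 hQ2)
      hQ3.coeffInt_ne_zero hij
  set s := Icc (-1) (n + 1)
  have hs {m k : ℤ} (hm : -1 ≤ -m) (hk : k ≤ n + 1) : Icc (-m) k ⊆ s :=
    Icc_subset_Icc hm hk
  have hc₁ := coeffInt_mul P Q 0 (n - 1) (hs (by omega) (by omega))
  have hc₂ := coeffInt_mul P Q 1 n (hs (by omega) (by omega))
  have hc₃ := coeffInt_mul P Q 0 n (hs (by omega) (by omega))
  have hc₄ := coeffInt_mul P Q 1 (n - 1) (hs (by omega) (by omega))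
  simp only [zero_add, add_sub_cancel] at hc₁ hc₂ hc₃ hc₄
  have hxy (i j : ℤ) (hij : i < j) :
      P.coeffInt i * P.coeffInt (1 + j) ≤ P.coeffInt j * P.coeffInt (1 + i) := by
    have := hA (show i + 1 ≤ j by omega)
    rw [add_sub_cancel_right, add_comm j, add_comm i] at this
    linarith
  have hzw (i j : ℤ) (hij : i < j) :
      Q.coeffInt (n - 1 - j) * Q.coeffInt (n - i) ≤
        Q.coeffInt (n - 1 - i) * Q.coeffInt (n - j) := by
    have := hB (show n - j ≤ n - 1 - i by omega)
    rw [sub_right_comm, show n - 1 - i + 1 = n - i by ring] at this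
    linarith
  calc (P * Q).coeffInt (n - 1) * (P * Q).coeffInt (n + 1)
      = (∑ j ∈ s, P.coeffInt j * Q.coeffInt (n - 1 - j)) *
          (∑ j ∈ s, P.coeffInt (1 + j) * Q.coeffInt (n - j)) := by rw [hc₁, add_comm, hc₂]
    _ ≤ (∑ j ∈ s, P.coeffInt j * Q.coeffInt (n - j)) *
          (∑ j ∈ s, P.coeffInt (1 + j) * Q.coeffInt (n - 1 - j)) :=
      sum_mul_sum_le_sum_mul_sum_of_minors s _ _ _ _ hxy hzw
    _ = (P * Q).coeffInt n ^ 2 := by rw [← hc₃, ← hc₄, sq]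

theorem NonnegCoeffs.mul {P Q : ℝ[X]} (hP : NonnegCoeffs P) (hQ : NonnegCoeffs Q) :
    NonnegCoeffs (P * Q) := fun k => by
  rw [coeff_mul]
  exact sum_nonneg fun p _ => mul_nonneg (hP _) (hQ _)

theorem NonnegCoeffs.coeff_mul_ne_zero_iff {P Q : ℝ[X]} (hP : NonnegCoeffs P)
    (hQ : NonnegCoeffs Q) {n : ℕ} :
    (P * Q).coeff n ≠ 0 ↔ ∃ a b, a + b = n ∧ P.coeff a ≠ 0 ∧ Q.coeff b ≠ 0 := by
  rw [coeff_mul]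
  constructor
  · intro h
    obtain ⟨⟨a, b⟩, hab, hne⟩ := exists_ne_zero_of_sum_ne_zero h
    exact ⟨a, b, mem_antidiagonal.1 hab, left_ne_zero_of_mul hne, right_ne_zero_of_mul hne⟩
  · rintro ⟨a, b, hab, ha, hb⟩
    have hpos : 0 < P.coeff a * Q.coeff b := mul_pos ((hP a).lt_of_ne' ha) ((hQ b).lt_of_ne' hb)
    refine (hpos.trans_le ?_).ne'
    exact single_le_sum (f := fun p : ℕ × ℕ => P.coeff p.1 * Q.coeff p.2)
      (fun p _ => mul_nonneg (hP _) (hQ _)) (a := (a, b)) (mem_antidiagonal.2 hab)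

theorem NoInternalZeros.coeff_ne_zero_of_min_le_of_le_max {P : ℝ[X]} (h : NoInternalZeros P)
    {a b j : ℕ} (ha : P.coeff a ≠ 0) (hb : P.coeff b ≠ 0) (haj : min a b ≤ j)
    (hjb : j ≤ max a b) : P.coeff j ≠ 0 := by
  rcases le_total a b with hab | hab
  · exact h a j b (by omega) (by omega) ha hb
  · exact h b j a (by omega) (by omega) hb ha

theorem NoInternalZeros.mul {P Q : ℝ[X]} (hP1 : NonnegCoeffs P) (hP3 : NoInternalZeros P)
    (hQ1 : NonnegCoeffs Q) (hQ3 : NoInternalZeros Q) : NoInternalZeros (P * Q) := by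
  intro i j l hij hjl hi hl
  obtain ⟨i₁, i₂, hi, hi₁, hi₂⟩ := (hP1.coeff_mul_ne_zero_iff hQ1).1 hi
  obtain ⟨l₁, l₂, hl, hl₁, hl₂⟩ := (hP1.coeff_mul_ne_zero_iff hQ1).1 hl
  -- the least split of `j` whose `Q`-part does not exceed `max i₂ l₂`
  set j₁ := max (min i₁ l₁) (j - max i₂ l₂)
  exact (hP1.coeff_mul_ne_zero_iff hQ1).2 ⟨j₁, j - j₁, by omega,
    hP3.coeff_ne_zero_of_min_le_of_le_max hi₁ hl₁ (by omega) (by omega),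
    hQ3.coeff_ne_zero_of_min_le_of_le_max hi₂ hl₂ (by omega) (by omega)⟩

/-- The product of two polynomials with nonnegative log-concave coefficient sequences
with no internal zeros again has a nonnegative log-concave coefficient sequence
with no internal zeros. -/
theorem stmt5 (P Q : Polynomial ℝ)
    (hP1 : NonnegCoeffs P) (hP2 : LogConcaveCoeffs P) (hP3 : NoInternalZeros P)
    (hQ1 : NonnegCoeffs Q) (hQ2 : LogConcaveCoeffs Q) (hQ3 : NoInternalZeros Q) :
    NonnegCoeffs (P * Q) ∧ LogConcaveCoeffs (P * Q) ∧ NoInternalZeros (P * Q) :=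
  ⟨hP1.mul hQ1, LogConcaveCoeffs.mul hP1 hP2 hP3 hQ1 hQ2 hQ3,
    NoInternalZeros.mul hP1 hP3 hQ1 hQ3⟩
end

section
/- For integers d ≥ 2 and n ≥ 1, the polynomial (1 + t + t^2 + ... + t^{d-2})^{n+1} has a log-concave sequence of coefficients. -/
/-!
Call `a : ℤ → R` a Pólya frequency sequence of order two if its Toeplitz matrix `(a (t - s))`
has nonnegative `2 × 2` minors; taking the rows `0, 1` and the columns `k, k + 1` shows that
such a sequence is log-concave. Multiplying Laurent polynomials multiplies these Toeplitz
matrices, so by the Cauchy–Binet formula for `2 × 2` minors the property passes to products.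
The coefficients of `1 + t + ⋯ + t^{d-2}` form the indicator of an interval, which has it,
hence so do all powers of that polynomial.
-/

open Polynomial LaurentPolynomial

theorem Finset.binet_cauchy {ι R : Type*} [CommRing R] (S : Finset ι) (u v x y : ι → R) :
    ∑ k ∈ S, ∑ l ∈ S, (u k * v l - u l * v k) * (x k * y l - x l * y k) =
      2 * ((∑ k ∈ S, u k * x k) * (∑ k ∈ S, v k * y k) -
        (∑ k ∈ S, u k * y k) * (∑ k ∈ S, v k * x k)) := by
  calc _ = ∑ k ∈ S, ∑ l ∈ S, (u k * x k * (v l * y l) - u k * y k * (v l * x l)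
          - v k * x k * (u l * y l) + v k * y k * (u l * x l)) :=
        Finset.sum_congr rfl fun k _ ↦ Finset.sum_congr rfl fun l _ ↦ by ring
    _ = _ := by
      simp only [Finset.sum_add_distrib, Finset.sum_sub_distrib, ← Finset.sum_mul_sum]
      ring

theorem Polynomial.coeff_toLaurent_natCast {R : Type*} [Semiring R] (p : R[X]) (n : ℕ) :
    (toLaurent p).coeff n = p.coeff n :=
  Finsupp.mapDomain_apply Nat.cast_injective _ n

theorem Polynomial.coeff_toLaurent_geom_sum {R : Type*} [Semiring R] (e : ℕ) :
    ⇑(toLaurent (∑ i ∈ Finset.range e, X ^ i : R[X])).coeff =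
      (Set.Ico 0 (e : ℤ)).indicator 1 := by
  ext z
  rcases lt_or_ge z 0 with hz | hz
  · have : ∀ i : ℕ, (i : ℤ) ≠ z := fun i ↦ by omega
    simp [toLaurent_X_pow, AddMonoidAlgebra.coeff_sum, this, hz.not_ge]
  · lift z to ℕ using hz
    simp [toLaurent_X_pow, AddMonoidAlgebra.coeff_sum, Set.indicator_apply]

theorem LaurentPolynomial.coeff_mul_sub_eq_sum {R : Type*} [Semiring R] {f : R[T;T⁻¹]}
    {s : ℤ} {S : Finset ℤ} (hS : ∀ r, f.coeff (r - s) ≠ 0 → r ∈ S) (g : R[T;T⁻¹]) (t : ℤ) :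
    (f * g).coeff (t - s) = ∑ r ∈ S, f.coeff (r - s) * g.coeff (t - r) := by
  rw [AddMonoidAlgebra.coeff_mul_apply_left, Finsupp.sum]
  refine Finset.sum_bij_ne_zero (fun h _ _ ↦ h + s) (fun h _ hh ↦ hS _ ?_)
    (fun _ _ _ _ _ _ ↦ by simp) (fun r _ hr ↦ ⟨r - s, ?_, ?_, by simp⟩)
    (fun h _ _ ↦ by rw [add_sub_cancel_right, neg_add_eq_sub, sub_sub, add_comm s])
  · simpa using left_ne_zero_of_mul hh
  · exact Finsupp.mem_support_iff.2 (left_ne_zero_of_mul hr)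
  · simpa [sub_sub_eq_add_sub, add_comm] using hr

section PolyaFrequency

variable {R : Type*} [CommRing R] [LinearOrder R] [IsStrictOrderedRing R]

def IsPF2 (a : ℤ → R) : Prop :=
  ∀ ⦃s₁ s₂ t₁ t₂ : ℤ⦄, s₁ ≤ s₂ → t₁ ≤ t₂ → a (t₂ - s₁) * a (t₁ - s₂) ≤ a (t₁ - s₁) * a (t₂ - s₂)

theorem IsPF2.mul_le_sq {a : ℤ → R} (ha : IsPF2 a) (k : ℤ) :
    a (k - 1) * a (k + 1) ≤ a k ^ 2 := by
  have h := @ha 0 1 k (k + 1) zero_le_one (by omega)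
  simp only [sub_zero, add_sub_cancel_right] at h
  linarith [sq (a k), mul_comm (a (k - 1)) (a (k + 1))]

theorem isPF2_indicator_Ico (m n : ℤ) : IsPF2 ((Set.Ico m n).indicator (1 : ℤ → R)) := by
  intro s₁ s₂ t₁ t₂ hs ht
  by_cases h : t₂ - s₁ ∈ Set.Ico m n ∧ t₁ - s₂ ∈ Set.Ico m n
  · obtain ⟨⟨h₁, h₂⟩, h₃, h₄⟩ := h
    rw [Set.indicator_of_mem (by constructor <;> omega : t₁ - s₁ ∈ Set.Ico m n),
      Set.indicator_of_mem (by constructor <;> omega : t₂ - s₂ ∈ Set.Ico m n)]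
    exact mul_le_mul (Set.indicator_le_self' (by simp) _) (Set.indicator_le_self' (by simp) _)
      (Set.indicator_nonneg (by simp) _) zero_le_one
  · rw [not_and_or] at h
    rcases h with h | h <;> simp [Set.indicator_of_notMem h, Set.indicator_nonneg, mul_nonneg]

theorem isPF2_coeff_one : IsPF2 ⇑(1 : R[T;T⁻¹]).coeff := by
  convert isPF2_indicator_Ico (R := R) 0 1 using 1
  ext z
  rw [← T_zero, T_apply, Set.indicator_apply]
  exact if_congr (by simp only [Set.mem_Ico]; omega) rfl rfl

theorem IsPF2.mul {f g : R[T;T⁻¹]} (hf : IsPF2 ⇑f.coeff) (hg : IsPF2 ⇑g.coeff) :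
    IsPF2 ⇑(f * g).coeff := by
  classical
  intro s₁ s₂ t₁ t₂ hs ht
  set S := f.coeff.support.image (· + s₁) ∪ f.coeff.support.image (· + s₂)
  have hS₁ : ∀ r, f.coeff (r - s₁) ≠ 0 → r ∈ S := fun r hr ↦
    Finset.mem_union_left _ (Finset.mem_image.2 ⟨r - s₁, Finsupp.mem_support_iff.2 hr, by simp⟩)
  have hS₂ : ∀ r, f.coeff (r - s₂) ≠ 0 → r ∈ S := fun r hr ↦
    Finset.mem_union_right _ (Finset.mem_image.2 ⟨r - s₂, Finsupp.mem_support_iff.2 hr, by simp⟩)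
  have h := S.binet_cauchy (fun r ↦ f.coeff (r - s₁)) (fun r ↦ f.coeff (r - s₂))
    (fun r ↦ g.coeff (t₁ - r)) (fun r ↦ g.coeff (t₂ - r))
  rw [← coeff_mul_sub_eq_sum hS₁, ← coeff_mul_sub_eq_sum hS₁, ← coeff_mul_sub_eq_sum hS₂,
    ← coeff_mul_sub_eq_sum hS₂] at h
  -- Both minors are antisymmetric in `(k, l)` and nonnegative for `k ≤ l`.
  have hminor : ∀ k l,
      0 ≤ (f.coeff (k - s₁) * f.coeff (l - s₂) - f.coeff (l - s₁) * f.coeff (k - s₂)) *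
        (g.coeff (t₁ - k) * g.coeff (t₂ - l) - g.coeff (t₁ - l) * g.coeff (t₂ - k)) := by
    intro k l
    rcases le_total k l with hkl | hlk
    · exact mul_nonneg (sub_nonneg.2 (hf hs hkl))
        (sub_nonneg.2 ((mul_comm _ _).trans_le (hg hkl ht)))
    · refine mul_nonneg_of_nonpos_of_nonpos ?_ ?_
      · linarith [hf hs hlk]
      · linarith [hg hlk ht, mul_comm (g.coeff (t₂ - l)) (g.coeff (t₁ - k))]
  have := Finset.sum_nonneg fun k (_ : k ∈ S) ↦ Finset.sum_nonneg fun l (_ : l ∈ S) ↦ hminor k l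
  linarith

theorem IsPF2.pow {f : R[T;T⁻¹]} (hf : IsPF2 ⇑f.coeff) (m : ℕ) : IsPF2 ⇑(f ^ m).coeff := by
  induction m with
  | zero => exact isPF2_coeff_one
  | succ m ih => exact pow_succ f m ▸ ih.mul hf

end PolyaFrequency

theorem stmt6_general (d n : ℕ) :
    ∀ k, 1 ≤ k →
      ((∑ i ∈ Finset.range (d - 1), (X : Polynomial ℝ) ^ i) ^ (n + 1)).coeff (k - 1)
        * ((∑ i ∈ Finset.range (d - 1), (X : Polynomial ℝ) ^ i) ^ (n + 1)).coeff (k + 1)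
      ≤ (((∑ i ∈ Finset.range (d - 1), (X : Polynomial ℝ) ^ i) ^ (n + 1)).coeff k) ^ 2 := by
  intro k hk
  obtain ⟨j, rfl⟩ : ∃ j, k = j + 1 := ⟨k - 1, by omega⟩
  set p := ∑ i ∈ Finset.range (d - 1), (X : ℝ[X]) ^ i
  have hp : IsPF2 ⇑(toLaurent p).coeff :=
    coeff_toLaurent_geom_sum (R := ℝ) (d - 1) ▸ isPF2_indicator_Ico 0 _
  have h := (map_pow toLaurent p (n + 1) ▸ hp.pow (n + 1)).mul_le_sq (j + 1)
  simpa [← coeff_toLaurent_natCast, add_assoc] using h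

/-- For integers `d ≥ 2` and `n ≥ 1`, the polynomial `(1 + t + ⋯ + t^{d-2})^{n+1}`
has a log-concave coefficient sequence: `a (k-1) * a (k+1) ≤ a k ^ 2` for all `k ≥ 1`. -/
theorem stmt6 (d n : ℕ) (hd : 2 ≤ d) (hn : 1 ≤ n) :
    ∀ k, 1 ≤ k →
      ((∑ i ∈ Finset.range (d - 1), (X : Polynomial ℝ) ^ i) ^ (n + 1)).coeff (k - 1)
        * ((∑ i ∈ Finset.range (d - 1), (X : Polynomial ℝ) ^ i) ^ (n + 1)).coeff (k + 1)
      ≤ (((∑ i ∈ Finset.range (d - 1), (X : Polynomial ℝ) ^ i) ^ (n + 1)).coeff k) ^ 2 :=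
  stmt6_general d n
end

section
/- Let d, a, b be integers with 1 ≤ a ≤ b < d. Define Q(t) by t^a·Q(t) = ((1-t^{d-1})/(1-t))^3 - ((1-t^{3d-3-a-b})/(1-t))·((1-t^a)/(1-t))·((1-t^b)/(1-t)). Then if (a,b) ≠ (d-1,d-1), Q is a symmetric polynomial of degree 3d-6-2a, i.e., its coefficients satisfy q_k = q_{3d-6-2a-k} for all k; and if a = b = d-1, then Q = 0. -/
open Polynomial

set_option maxHeartbeats 1000000 in
/-- Let `1 ≤ a ≤ b < d` be integers and set
`N = ((1-t^{d-1})/(1-t))^3 - ((1-t^{3d-3-a-b})/(1-t))((1-t^a)/(1-t))((1-t^b)/(1-t))`,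
where `(1-t^m)/(1-t) = 1 + t + ⋯ + t^{m-1}`. If `(a,b) ≠ (d-1,d-1)`, then `N = t^a · Q`
where `Q` is a symmetric (palindromic) polynomial of degree `3d-6-2a`; and if
`a = b = d-1` then `N = 0`. -/
theorem stmt8 (a b d : ℕ) (ha : 1 ≤ a) (hab : a ≤ b) (hbd : b < d) :
    (¬(a = d - 1 ∧ b = d - 1) →
      ∃ Q : Polynomial ℝ,
        (∑ i ∈ Finset.range (d - 1), (X : Polynomial ℝ) ^ i) ^ 3
            - (∑ i ∈ Finset.range (3 * d - 3 - a - b), (X : Polynomial ℝ) ^ i)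
              * (∑ i ∈ Finset.range a, (X : Polynomial ℝ) ^ i)
              * (∑ i ∈ Finset.range b, (X : Polynomial ℝ) ^ i)
          = X ^ a * Q ∧
        Q.natDegree = 3 * d - 6 - 2 * a ∧
        (∀ k, k ≤ 3 * d - 6 - 2 * a → Q.coeff k = Q.coeff (3 * d - 6 - 2 * a - k))) ∧
    (a = d - 1 → b = d - 1 →
      (∑ i ∈ Finset.range (d - 1), (X : Polynomial ℝ) ^ i) ^ 3
          - (∑ i ∈ Finset.range (3 * d - 3 - a - b), (X : Polynomial ℝ) ^ i)
            * (∑ i ∈ Finset.range a, (X : Polynomial ℝ) ^ i)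
            * (∑ i ∈ Finset.range b, (X : Polynomial ℝ) ^ i)
        = 0) := by
  constructor
  · intro hne
    obtain ⟨m, rfl⟩ : ∃ m, b = a + m := ⟨b - a, by omega⟩
    obtain ⟨n, rfl⟩ : ∃ n, d = a + m + n + 1 := ⟨d - (a + m) - 1, by omega⟩
    have hmn : 1 ≤ m + n := by omega
    have e1 : a + m + n + 1 - 1 = a + m + n := by omega
    have e2 : 3 * (a + m + n + 1) - 3 - a - (a + m) = a + 2*m + 3*n := by omega
    obtain ⟨D, hD⟩ : ∃ D, a + 3*m + 3*n = D + 3 := ⟨a + 3*m + 3*n - 3, by omega⟩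
    have e3 : 3 * (a + m + n + 1) - 6 - 2*a = D := by omega
    rw [e1, e2, e3]
    set S : ℝ[X] := C 3 * X^(m+n) + C (-3) * X^(a+2*m+2*n) + C 1 * X^(a+m)
        + C 1 * X^(a+2*m+3*n) + C 1 * X^(a+3*m+3*n) + C (-1) * X^0 + C (-1) * X^m
        + C (-1) * X^(2*m+3*n) with hS
    have key : (X - 1)^3 *
        ((∑ i ∈ Finset.range (a+m+n), (X:ℝ[X])^i)^3
          - (∑ i ∈ Finset.range (a+2*m+3*n), (X:ℝ[X])^i)
            * (∑ i ∈ Finset.range a, (X:ℝ[X])^i)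
            * (∑ i ∈ Finset.range (a+m), (X:ℝ[X])^i)) = X^a * S := by
      have g1 := geom_sum_mul (X:ℝ[X]) (a+m+n)
      have g2 := geom_sum_mul (X:ℝ[X]) (a+2*m+3*n)
      have g3 := geom_sum_mul (X:ℝ[X]) a
      have g4 := geom_sum_mul (X:ℝ[X]) (a+m)
      calc (X - 1)^3 *
          ((∑ i ∈ Finset.range (a+m+n), (X:ℝ[X])^i)^3
            - (∑ i ∈ Finset.range (a+2*m+3*n), (X:ℝ[X])^i)
              * (∑ i ∈ Finset.range a, (X:ℝ[X])^i)
              * (∑ i ∈ Finset.range (a+m), (X:ℝ[X])^i))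
          = ((∑ i ∈ Finset.range (a+m+n), (X:ℝ[X])^i) * (X - 1))^3
            - ((∑ i ∈ Finset.range (a+2*m+3*n), (X:ℝ[X])^i) * (X - 1))
              * ((∑ i ∈ Finset.range a, (X:ℝ[X])^i) * (X - 1))
              * ((∑ i ∈ Finset.range (a+m), (X:ℝ[X])^i) * (X - 1)) := by ring
        _ = ((X:ℝ[X])^(a+m+n) - 1)^3
            - ((X:ℝ[X])^(a+2*m+3*n) - 1) * ((X:ℝ[X])^a - 1) * ((X:ℝ[X])^(a+m) - 1) := by
            rw [g1, g2, g3, g4]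
        _ = X^a * S := by rw [hS]; simp only [C_neg, C_1, map_ofNat]; ring
    have hXne : (X:ℝ[X])^a ≠ 0 := pow_ne_zero _ X_ne_zero
    have hcop : IsCoprime ((X:ℝ[X])^a) ((X - 1)^3) :=
      (IsCoprime.pow (⟨1, -1, by ring⟩ : IsCoprime (X:ℝ[X]) (X - 1)))
    have hdvd : (X:ℝ[X])^a ∣
        ((∑ i ∈ Finset.range (a+m+n), (X:ℝ[X])^i)^3
          - (∑ i ∈ Finset.range (a+2*m+3*n), (X:ℝ[X])^i)
            * (∑ i ∈ Finset.range a, (X:ℝ[X])^i)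
            * (∑ i ∈ Finset.range (a+m), (X:ℝ[X])^i)) :=
      hcop.dvd_of_dvd_mul_left (by rw [key]; exact dvd_mul_right _ _)
    obtain ⟨Q, hQ⟩ := hdvd
    have key2 : (X - 1)^3 * Q = S := by
      rw [hQ] at key
      have h' : (X:ℝ[X])^a * ((X - 1)^3 * Q) = X^a * S := by rw [← key]; ring
      exact mul_left_cancel₀ hXne h'
    have hSne : S.coeff (D+3) ≠ 0 := by
      rw [hS, ← hD]
      simp only [coeff_add, coeff_C_mul, coeff_X_pow]
      split_ifs <;> first | (exfalso; omega) | norm_num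
    have hSdeg : S.natDegree = D + 3 := by
      refine le_antisymm (natDegree_le_iff_coeff_eq_zero.mpr fun N hN => ?_)
        (le_natDegree_of_ne_zero hSne)
      rw [hS]
      simp only [coeff_add, coeff_C_mul, coeff_X_pow]
      split_ifs <;> first | (exfalso; omega) | norm_num
    have hSne0 : S ≠ 0 := fun h => hSne (by rw [h, coeff_zero])
    have hQne : Q ≠ 0 := by
      rintro rfl
      rw [mul_zero] at key2
      exact hSne0 key2.symm
    have hx1ne : ((X:ℝ[X]) - 1) ≠ 0 := by
      have := X_sub_C_ne_zero (1:ℝ)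
      simpa using this
    have hx1deg : ((X:ℝ[X]) - 1).natDegree = 1 := by
      have := natDegree_X_sub_C (1:ℝ)
      simpa using this
    have hQdeg : Q.natDegree = D := by
      have h := congrArg natDegree key2
      rw [natDegree_mul (pow_ne_zero _ hx1ne) hQne, natDegree_pow, hx1deg, hSdeg] at h
      omega
    have hreflS : reflect (3 + D) S = -S := by
      have r1 : revAt (3+D) (m+n) = a+2*m+2*n := by rw [revAt_le (by omega)]; omega
      have r2 : revAt (3+D) (a+2*m+2*n) = m+n := by rw [revAt_le (by omega)]; omega
      have r3 : revAt (3+D) (a+m) = 2*m+3*n := by rw [revAt_le (by omega)]; omega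
      have r4 : revAt (3+D) (a+2*m+3*n) = m := by rw [revAt_le (by omega)]; omega
      have r5 : revAt (3+D) (a+3*m+3*n) = 0 := by rw [revAt_le (by omega)]; omega
      have r6 : revAt (3+D) 0 = a+3*m+3*n := by rw [revAt_le (by omega)]; omega
      have r7 : revAt (3+D) m = a+2*m+3*n := by rw [revAt_le (by omega)]; omega
      have r8 : revAt (3+D) (2*m+3*n) = a+m := by rw [revAt_le (by omega)]; omega
      rw [hS]
      simp only [reflect_add, reflect_C_mul_X_pow, r1, r2, r3, r4, r5, r6, r7, r8]
      simp only [C_neg, C_1, map_ofNat]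
      ring
    have hrefl3 : reflect 3 (((X:ℝ[X]) - 1)^3) = -((X:ℝ[X]) - 1)^3 := by
      have h1 : ((X:ℝ[X]) - 1)^3 = C 1 * X^3 + C (-3) * X^2 + C 3 * X^1 + C (-1) * X^0 := by
        simp only [C_neg, C_1, map_ofNat]; ring
      rw [h1]
      simp only [reflect_add, reflect_C_mul_X_pow]
      rw [revAt_le (by omega : 3 ≤ 3), revAt_le (by omega : 2 ≤ 3),
        revAt_le (by omega : 1 ≤ 3), revAt_le (by omega : 0 ≤ 3)]
      simp only [C_neg, C_1, map_ofNat]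
      norm_num
      ring
    have hX3ne : ((X:ℝ[X]) - 1)^3 ≠ 0 := pow_ne_zero _ hx1ne
    have hrefl : reflect D Q = Q := by
      have hm := reflect_mul (((X:ℝ[X]) - 1)^3) Q
        (by rw [natDegree_pow, hx1deg]) (le_of_eq hQdeg)
      rw [key2, hreflS, hrefl3] at hm
      have h2 : ((X:ℝ[X]) - 1)^3 * reflect D Q = ((X:ℝ[X]) - 1)^3 * Q := by
        rw [key2]
        have h3 : ((X:ℝ[X]) - 1)^3 * reflect D Q = -(-((X:ℝ[X]) - 1)^3 * reflect D Q) := by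
          ring
        rw [h3, ← hm, neg_neg]
      exact mul_left_cancel₀ hX3ne h2
    refine ⟨Q, hQ, hQdeg, ?_⟩
    intro k hk
    conv_lhs => rw [← hrefl]
    rw [coeff_reflect, revAt_le (by omega)]
  · intro h1 h2
    subst h1
    have hb' : b = d - 1 := h2
    subst hb'
    rw [show 3 * d - 3 - (d-1) - (d-1) = d - 1 from by omega]
    ring
end

section
/- Let a, d be integers with a ≥ 2, a + 2 ≤ d ≤ 2a (so a ≤ d-2 ≤ 2a-2), and 4a + 1 < 3d. Define q_k = C(k+a+2,2) - 3·C(k+a+3-d,2) - a^2 for k ≥ a-1. Then the sequence (q_k) for a-1 ≤ k ≤ (3d-6)/2 - a is strictly log-concave: q_k^2 > q_{k-1} q_{k+1} for all a ≤ k ≤ (3d-6)/2 - a - 1. -/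
/-- `C(j,2) = j(j-1)/2` for an integer `j ≥ 2`, with the convention `C(j,2) = 0` for `j < 2`. -/
def c2 (j : ℤ) : ℤ := if 2 ≤ j then j * (j - 1) / 2 else 0

lemma two_mul_c2 (j : ℤ) (h : 2 ≤ j) : 2 * c2 j = j * (j - 1) := by
  have hev : (2 : ℤ) ∣ j * (j - 1) := by
    have h2 : Even (j * (j - 1)) := by
      rw [show j * (j - 1) = (j - 1) * (j - 1 + 1) by ring]
      exact Int.even_mul_succ_self _
    exact h2.two_dvd
  unfold c2
  rw [if_pos h]
  exact Int.mul_ediv_cancel' hev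

set_option maxHeartbeats 2000000 in
/-- Subcase (1.1.1): let `a, d` be integers with `a ≥ 2`, `a + 2 ≤ d ≤ 2a` and `4a + 1 < 3d`.
The sequence `q k = C(k+a+2,2) - 3 C(k+a+3-d,2) - a²` (defined for `k ≥ a - 1`) is strictly
log-concave on the range up to `(3d-6)/2 - a`. -/
theorem stmt9 (a d : ℤ) (ha : 2 ≤ a) (hd1 : a + 2 ≤ d) (hd2 : d ≤ 2 * a)
    (hd3 : 4 * a + 1 < 3 * d) (k : ℤ) (hk1 : a ≤ k) (hk2 : k ≤ (3 * d - 6) / 2 - a - 1) :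
    (c2 ((k - 1) + a + 2) - 3 * c2 ((k - 1) + a + 3 - d) - a ^ 2)
      * (c2 ((k + 1) + a + 2) - 3 * c2 ((k + 1) + a + 3 - d) - a ^ 2)
      < (c2 (k + a + 2) - 3 * c2 (k + a + 3 - d) - a ^ 2) ^ 2 := by
  have hk2' : 2 * k + 2 * a + 8 ≤ 3 * d := by omega
  have e1 := two_mul_c2 ((k - 1) + a + 2) (by omega)
  have e2 := two_mul_c2 ((k - 1) + a + 3 - d) (by omega)
  have e3 := two_mul_c2 ((k + 1) + a + 2) (by omega)
  have e4 := two_mul_c2 ((k + 1) + a + 3 - d) (by omega)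
  have e5 := two_mul_c2 (k + a + 2) (by omega)
  have e6 := two_mul_c2 (k + a + 3 - d) (by omega)
  set A := c2 ((k - 1) + a + 2) with hA
  set B := c2 ((k - 1) + a + 3 - d) with hB
  set C := c2 ((k + 1) + a + 2) with hC
  set D := c2 ((k + 1) + a + 3 - d) with hD
  set E := c2 (k + a + 2) with hE
  set F := c2 (k + a + 3 - d) with hF
  -- the three doubled q-values as polynomials
  set PA : ℤ := (k + a + 1) * (k + a) - 3 * ((k + a + 2 - d) * (k + a + 1 - d)) - 2 * a ^ 2 with hPA
  set PC : ℤ := (k + a + 3) * (k + a + 2) - 3 * ((k + a + 4 - d) * (k + a + 3 - d)) - 2 * a ^ 2 with hPC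
  set PE : ℤ := (k + a + 2) * (k + a + 1) - 3 * ((k + a + 3 - d) * (k + a + 2 - d)) - 2 * a ^ 2 with hPE
  have hAm : 2 * A - 6 * B - 2 * a ^ 2 = PA := by rw [hPA]; linear_combination e1 - 3 * e2
  have hCm : 2 * C - 6 * D - 2 * a ^ 2 = PC := by rw [hPC]; linear_combination e3 - 3 * e4
  have hEm : 2 * E - 6 * F - 2 * a ^ 2 = PE := by rw [hPE]; linear_combination e5 - 3 * e6
  have h4 : 4 * ((A - 3 * B - a ^ 2) * (C - 3 * D - a ^ 2)) = PA * PC := by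
    rw [← hAm, ← hCm]; ring
  have h5 : 4 * ((E - 3 * F - a ^ 2) ^ 2) = PE ^ 2 := by
    rw [← hEm]; ring
  -- key inequality for the polynomial values
  set s : ℤ := 2 * k + 2 * a - 3 * d + 6 with hs
  have hsle : s ≤ -2 := by omega
  have hs2 : s ^ 2 ≥ 4 := by nlinarith [hsle]
  have hq : 2 * PE + s ^ 2 ≥ 0 := by
    rw [hPE, hs]
    have h1 : (0 : ℤ) ≤ 4 * a - 1 := by linarith
    have h2 : 4 * a - 1 ≤ 3 * d - 3 := by linarith
    nlinarith [mul_self_le_mul_self h1 h2, sq_nonneg (a - 1)]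
  have hkey : PE + s ^ 2 ≥ 2 := by linarith
  have hid : PE ^ 2 - PA * PC = 4 * PE - 4 + 4 * s ^ 2 := by
    rw [hPA, hPC, hPE, hs]; ring
  have hpoly : PA * PC < PE ^ 2 := by linarith [hkey, hid]
  linarith [h4, h5, hpoly]
end

section
/- Let a, d be integers with a ≥ 1 and d ≥ 2a+1. Define q_k = C(k+a+2,2) - 3·C(k+a+3-d,2) - a^2 for k ≥ d-a-1. Then q_k^2 > q_{k-1} q_{k+1} for all k in the range d-a ≤ k ≤ (3d-6)/2 - a - 1. -/
lemma c2_eq {j : ℤ} (h : 2 ≤ j) : 2 * c2 j = j * (j - 1) := by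
  rw [c2, if_pos h, Int.mul_ediv_cancel']
  have : Even ((j - 1) * (j - 1 + 1)) := Int.even_mul_succ_self (j - 1)
  have h2 : Even (j * (j - 1)) := by
    have e : (j - 1) * (j - 1 + 1) = j * (j - 1) := by ring
    rwa [e] at this
  exact h2.two_dvd

set_option maxHeartbeats 1000000 in
/-- Subcase (1.1.2): let `a, d` be integers with `a ≥ 1` and `d ≥ 2a + 1`. For
`q k = C(k+a+2,2) - 3 C(k+a+3-d,2) - a²` (defined for `k ≥ d - a - 1`), one has
`q k ^ 2 > q (k-1) * q (k+1)` for all `d - a ≤ k ≤ (3d-6)/2 - a - 1`. -/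
theorem stmt10 (a d : ℤ) (ha : 1 ≤ a) (hd : 2 * a + 1 ≤ d)
    (k : ℤ) (hk1 : d - a ≤ k) (hk2 : k ≤ (3 * d - 6) / 2 - a - 1) :
    (c2 ((k - 1) + a + 2) - 3 * c2 ((k - 1) + a + 3 - d) - a ^ 2)
      * (c2 ((k + 1) + a + 2) - 3 * c2 ((k + 1) + a + 3 - d) - a ^ 2)
      < (c2 (k + a + 2) - 3 * c2 (k + a + 3 - d) - a ^ 2) ^ 2 := by
  have h2k : 2 * k ≤ 3 * d - 2 * a - 8 := by omega
  have e1 := c2_eq (show (2:ℤ) ≤ (k - 1) + a + 2 by omega)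
  have e2 := c2_eq (show (2:ℤ) ≤ (k - 1) + a + 3 - d by omega)
  have e3 := c2_eq (show (2:ℤ) ≤ (k + 1) + a + 2 by omega)
  have e4 := c2_eq (show (2:ℤ) ≤ (k + 1) + a + 3 - d by omega)
  have e5 := c2_eq (show (2:ℤ) ≤ k + a + 2 by omega)
  have e6 := c2_eq (show (2:ℤ) ≤ k + a + 3 - d by omega)
  -- doubled values
  have h1 : 2 * (c2 ((k - 1) + a + 2) - 3 * c2 ((k - 1) + a + 3 - d) - a ^ 2)
      = (k + a + 1) * (k + a) - 3 * ((k + a + 2 - d) * (k + a + 1 - d)) - 2 * a ^ 2 := by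
    linear_combination e1 - 3 * e2
  have h3 : 2 * (c2 ((k + 1) + a + 2) - 3 * c2 ((k + 1) + a + 3 - d) - a ^ 2)
      = (k + a + 3) * (k + a + 2) - 3 * ((k + a + 4 - d) * (k + a + 3 - d)) - 2 * a ^ 2 := by
    linear_combination e3 - 3 * e4
  have h2 : 2 * (c2 (k + a + 2) - 3 * c2 (k + a + 3 - d) - a ^ 2)
      = (k + a + 2) * (k + a + 1) - 3 * ((k + a + 3 - d) * (k + a + 2 - d)) - 2 * a ^ 2 := by
    linear_combination e5 - 3 * e6
  set P1 : ℤ := (k + a + 1) * (k + a) - 3 * ((k + a + 2 - d) * (k + a + 1 - d)) - 2 * a ^ 2 with hP1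
  set P3 : ℤ := (k + a + 3) * (k + a + 2) - 3 * ((k + a + 4 - d) * (k + a + 3 - d)) - 2 * a ^ 2 with hP3
  set P2 : ℤ := (k + a + 2) * (k + a + 1) - 3 * ((k + a + 3 - d) * (k + a + 2 - d)) - 2 * a ^ 2 with hP2
  have hu : 2 ≤ 3 * d - 2 * a - 6 - 2 * k := by omega
  have hq : 0 ≤ P2 := by
    have ht : 0 ≤ k - (d - a) := by omega
    have hs : 0 ≤ 2 * d - a - 6 - k := by omega
    nlinarith [mul_nonneg ht hs, sq_nonneg a, ha]
  have hid : P2 ^ 2 - P1 * P3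
      = 4 * (3 * d - 2 * a - 6 - 2 * k) ^ 2 - 4 + 4 * P2 := by
    rw [hP1, hP2, hP3]; ring
  have key : P1 * P3 < P2 ^ 2 := by
    nlinarith [hid, hq, hu, sq_nonneg (3 * d - 2 * a - 6 - 2 * k)]
  nlinarith [key, h1, h2, h3]
end

section
/- Let a, b be integers with 1 ≤ a < b and b ≥ 2a - 1, and set d = b + 1. Define q_k = C(k+a+2,2) - 3·C(k+2-(b-a),2) - ab for k ≥ b-1. Then q_k^2 > q_{k-1} q_{k+1} for all k with b ≤ k ≤ (3d-6)/2 - a - 1. -/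
set_option maxHeartbeats 1000000

/-- Subcase (1.2.1): let `a, b` be integers with `1 ≤ a < b`, `b ≥ 2a - 1`, and set `d = b + 1`.
For `q k = C(k+a+2,2) - 3 C(k+2-(b-a),2) - ab` (defined for `k ≥ b - 1`), one has
`q k ^ 2 > q (k-1) * q (k+1)` for all `b ≤ k ≤ (3d-6)/2 - a - 1`. -/
theorem stmt11 (a b d : ℤ) (ha : 1 ≤ a) (hab : a < b) (hb : 2 * a - 1 ≤ b) (hd : d = b + 1)
    (k : ℤ) (hk1 : b ≤ k) (hk2 : k ≤ (3 * d - 6) / 2 - a - 1) :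
    (c2 ((k - 1) + a + 2) - 3 * c2 ((k - 1) + 2 - (b - a)) - a * b)
      * (c2 ((k + 1) + a + 2) - 3 * c2 ((k + 1) + 2 - (b - a)) - a * b)
      < (c2 (k + a + 2) - 3 * c2 (k + 2 - (b - a)) - a * b) ^ 2 := by
  subst hd
  have h2k : 2 * k ≤ 3 * b - 2 * a - 5 := by omega
  have hA1 : 2 * c2 ((k - 1) + a + 2) = (k + a + 1) * (k + a) := by
    rw [two_mul_c2 _ (by linarith)]; ring
  have hA2 : 2 * c2 (k + a + 2) = (k + a + 2) * (k + a + 1) := by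
    rw [two_mul_c2 _ (by linarith)]; ring
  have hA3 : 2 * c2 ((k + 1) + a + 2) = (k + a + 3) * (k + a + 2) := by
    rw [two_mul_c2 _ (by linarith)]; ring
  have hB1 : 2 * c2 ((k - 1) + 2 - (b - a)) = (k + 1 - b + a) * (k - b + a) := by
    rw [two_mul_c2 _ (by linarith)]; ring
  have hB2 : 2 * c2 (k + 2 - (b - a)) = (k + 2 - b + a) * (k + 1 - b + a) := by
    rw [two_mul_c2 _ (by linarith)]; ring
  have hB3 : 2 * c2 ((k + 1) + 2 - (b - a)) = (k + 3 - b + a) * (k + 2 - b + a) := by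
    rw [two_mul_c2 _ (by linarith)]; ring
  set q1 := c2 ((k - 1) + a + 2) - 3 * c2 ((k - 1) + 2 - (b - a)) - a * b with hq1
  set q2 := c2 (k + a + 2) - 3 * c2 (k + 2 - (b - a)) - a * b with hq2
  set q3 := c2 ((k + 1) + a + 2) - 3 * c2 ((k + 1) + 2 - (b - a)) - a * b with hq3
  have e1 : 2 * q1 = (k + a + 1) * (k + a) - 3 * ((k + 1 - b + a) * (k - b + a)) - 2 * (a * b) := by
    rw [hq1]; linarith [hA1, hB1]
  have e2 : 2 * q2 = (k + a + 2) * (k + a + 1) - 3 * ((k + 2 - b + a) * (k + 1 - b + a)) - 2 * (a * b) := by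
    rw [hq2]; linarith [hA2, hB2]
  have e3 : 2 * q3 = (k + a + 3) * (k + a + 2) - 3 * ((k + 3 - b + a) * (k + 2 - b + a)) - 2 * (a * b) := by
    rw [hq3]; linarith [hA3, hB3]
  -- key facts
  have hbig : 2 * a + 5 ≤ b := by linarith
  have ht : 4 ≤ 6 * b - 4 * a - 6 - 4 * k := by linarith
  have hQb : (2:ℤ) * a ^ 2 + 20 * a + 36 ≤ b ^ 2 + 3 * b - 2 * a ^ 2 - 6 * a - 4 := by
    nlinarith [mul_nonneg (by linarith : (0:ℤ) ≤ b - (2 * a + 5)) (by linarith : (0:ℤ) ≤ b + 2 * a + 8)]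
  have hmono : 0 ≤ (k - b) * (4 * b - 4 * a - 6 - 2 * k) := by
    apply mul_nonneg <;> linarith
  have hQ : 0 < (k + a + 2) * (k + a + 1) - 3 * ((k + 2 - b + a) * (k + 1 - b + a)) - 2 * (a * b) := by
    nlinarith [hmono, hQb]
  have key : (2 * q1) * (2 * q3) < (2 * q2) ^ 2 := by
    rw [e1, e3, e2]
    nlinarith [ht, hQ, sq_nonneg (6 * b - 4 * a - 6 - 4 * k - 4)]
  linarith [key]
end

section
/- The quadratic in x given by f(x) = x^2 - (4y+2z+3)x + (10y^2+10yz+3z^2+24y+13z+16) is strictly positive for all real x whenever y ≥ 0 and z ≥ 0, since its discriminant equals -(6y^2+6yz+2z^2+18y+10z+55/4)·4 < 0 (i.e., the discriminant (4y+2z+3)^2 - 4(10y^2+10yz+3z^2+24y+13z+16) is negative). -/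
/-- The quadratic `f(x) = x² - (4y+2z+3)x + (10y²+10yz+3z²+24y+13z+16)` is strictly positive
for all real `x` whenever `y ≥ 0` and `z ≥ 0`, since its discriminant
`(4y+2z+3)² - 4(10y²+10yz+3z²+24y+13z+16)` equals `-(6y²+6yz+2z²+18y+10z+55/4)·4`,
which is negative. -/
theorem stmt13 (x y z : ℝ) (hy : 0 ≤ y) (hz : 0 ≤ z) :
    0 < x ^ 2 - (4 * y + 2 * z + 3) * x
        + (10 * y ^ 2 + 10 * y * z + 3 * z ^ 2 + 24 * y + 13 * z + 16) ∧
    (4 * y + 2 * z + 3) ^ 2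
        - 4 * (10 * y ^ 2 + 10 * y * z + 3 * z ^ 2 + 24 * y + 13 * z + 16)
      = -(6 * y ^ 2 + 6 * y * z + 2 * z ^ 2 + 18 * y + 10 * z + 55 / 4) * 4 ∧
    (4 * y + 2 * z + 3) ^ 2
        - 4 * (10 * y ^ 2 + 10 * y * z + 3 * z ^ 2 + 24 * y + 13 * z + 16) < 0 := by
  refine ⟨?_, by ring, by nlinarith [sq_nonneg y, sq_nonneg z, mul_nonneg hy hz]⟩
  nlinarith [sq_nonneg (x - (2*y+z+3/2)), sq_nonneg y, sq_nonneg z, mul_nonneg hy hz]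
end

section
/- Let d ≥ 2 and let 1 ≤ a ≤ b < d be integers. Then the polynomial D(t) = ((1-t^{3d-3-a-b})/(1-t)) · ((1-t^a)/(1-t)) · ((1-t^b)/(1-t)) has a nonnegative, log-concave coefficient sequence with no internal zeros, and hence is unimodal. -/
/-!
The coefficient sequence of `1 + t + ⋯ + t^(m-1)` is the indicator of an interval, hence a
Pólya frequency sequence of order two (PF₂): nonnegative, with `f (u-1) f (v+1) ≤ f u f v`
whenever `u ≤ v`. PF₂ is preserved by convolution: the difference of the two products of
convolution sums symmetrises to a double sum of products of two minors of the same sign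
(the `2 × 2` case of Cauchy–Binet). A PF₂ sequence is log-concave without internal zeros, and a
finitely supported such sequence increases up to its first strict descent and decreases after it.
-/

open Polynomial Finset

section PF2

variable {R : Type*} [CommRing R] [LinearOrder R]

structure IsPF2_s19 (f : ℤ → R) : Prop where
  nonneg : ∀ n, 0 ≤ f n
  mul_le_mul : ∀ u v, u ≤ v → f (u - 1) * f (v + 1) ≤ f u * f v

theorem IsPF2_s19.mul_le_mul_of_add_eq {f : ℤ → R} (hf : IsPF2_s19 f) {i l p q : ℤ} (hip : i ≤ p)
    (hiq : i ≤ q) (h : i + l = p + q) : f i * f l ≤ f p * f q := by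
  wlog hpq : p ≤ q generalizing p q
  · rw [mul_comm (f p)]; exact this hiq hip (by omega) (by omega)
  obtain rfl : l = p + q - i := by omega
  clear h
  induction i, hip using Int.leInductionDown with
  | base => simp
  | pred i hip ih =>
    calc f (i - 1) * f (p + q - (i - 1)) = f (i - 1) * f (p + q - i + 1) := by ring_nf
      _ ≤ f i * f (p + q - i) := hf.mul_le_mul _ _ (by omega)
      _ ≤ f p * f q := ih (by omega)

variable [IsStrictOrderedRing R]

theorem IsPF2_s19.ne_zero_of_le_of_le {f : ℤ → R} (hf : IsPF2_s19 f) {i j l : ℤ} (hij : i ≤ j)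
    (hjl : j ≤ l) (hi : f i ≠ 0) (hl : f l ≠ 0) : f j ≠ 0 := by
  intro hj
  have h := hf.mul_le_mul_of_add_eq (l := l) (q := i + l - j) hij (by omega) (by ring)
  rw [hj, zero_mul] at h
  exact (mul_pos ((hf.nonneg i).lt_of_ne' hi) ((hf.nonneg l).lt_of_ne' hl)).not_ge h

theorem Finset.sum_sum_mul_sub_swap_nonneg {ι : Type*} [LinearOrder ι] (T : Finset ι)
    {F G : ι → ι → R} (hF : ∀ t s, t ≤ s → F s t ≤ F t s) (hG : ∀ t s, t ≤ s → G s t ≤ G t s) :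
    0 ≤ ∑ t ∈ T, ∑ s ∈ T, F t s * (G t s - G s t) := by
  have hsymm : 2 * ∑ t ∈ T, ∑ s ∈ T, F t s * (G t s - G s t) =
      ∑ t ∈ T, ∑ s ∈ T, (F t s - F s t) * (G t s - G s t) := by
    rw [two_mul]
    nth_rw 2 [sum_comm]
    rw [← sum_add_distrib]
    refine sum_congr rfl fun t _ => ?_
    rw [← sum_add_distrib]
    exact sum_congr rfl fun s _ => by ring
  have : 0 ≤ 2 * ∑ t ∈ T, ∑ s ∈ T, F t s * (G t s - G s t) := hsymm ▸ sum_nonneg fun t _ =>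
    sum_nonneg fun s _ => by
      rcases le_total t s with hts | hst
      · exact mul_nonneg (sub_nonneg.2 (hF t s hts)) (sub_nonneg.2 (hG t s hts))
      · exact mul_nonneg_of_nonpos_of_nonpos (sub_nonpos.2 (hF s t hst))
          (sub_nonpos.2 (hG s t hst))
  exact (mul_nonneg_iff_of_pos_left two_pos).mp this

theorem IsPF2_s19.sum_mul_sum_le {f g : ℤ → R} (hf : IsPF2_s19 f) (hg : IsPF2_s19 g) {u v : ℤ} (huv : u ≤ v)
    (T : Finset ℤ) :
    (∑ t ∈ T, f (t - 1) * g (u - t)) * ∑ t ∈ T, f t * g (v + 1 - t) ≤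
      (∑ t ∈ T, f t * g (u - t)) * ∑ t ∈ T, f (t - 1) * g (v + 1 - t) := by
  have key := T.sum_sum_mul_sub_swap_nonneg (F := fun t s => f t * f (s - 1))
    (G := fun t s => g (u - t) * g (v + 1 - s))
    (fun t s hts => by
      simpa [mul_comm] using hf.mul_le_mul_of_add_eq (l := s) (by omega : t - 1 ≤ t)
        (by omega : t - 1 ≤ s - 1) (by ring))
    (fun t s hts => hg.mul_le_mul_of_add_eq (by omega) (by omega) (by ring))
  rw [← sub_nonneg]
  convert key using 1
  rw [sum_mul_sum, sum_mul_sum, sum_comm (s := T) (t := T) (f := fun s t => f (s - 1) * _ * _),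
    ← sum_sub_distrib]
  refine sum_congr rfl fun t _ => ?_
  rw [← sum_sub_distrib]
  exact sum_congr rfl fun s _ => by ring

theorem exists_peak_of_logConcave {g : ℕ → R} (hg : ∀ k, 0 ≤ g k)
    (hlc : ∀ k, g k * g (k + 2) ≤ g (k + 1) ^ 2)
    (hgap : ∀ i j l, i ≤ j → j ≤ l → g i ≠ 0 → g l ≠ 0 → g j ≠ 0)
    (hfin : ∃ N, ∀ n, N ≤ n → g n = 0) :
    ∃ i, (∀ j, j < i → g j ≤ g (j + 1)) ∧ ∀ j, i ≤ j → g (j + 1) ≤ g j := by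
  classical
  by_cases hdrop : ∃ N, g (N + 1) < g N
  · refine ⟨Nat.find hdrop, fun j hj => not_lt.mp (Nat.find_min hdrop hj), fun j hj => ?_⟩
    have hpeak : 0 < g (Nat.find hdrop) := (hg _).trans_lt (Nat.find_spec hdrop)
    induction j, hj using Nat.le_induction with
    | base => exact (Nat.find_spec hdrop).le
    | succ n hn ih =>
      rcases (hg (n + 1)).eq_or_lt with h0 | hpos
      · have : g (n + 2) = 0 := by
          by_contra hne
          exact hgap _ (n + 1) (n + 2) (by omega) (by omega) hpeak.ne' hne h0.symm
        rw [this, ← h0]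
      · refine le_of_mul_le_mul_left ?_ (hpos.trans_le ih)
        calc g n * g (n + 2) ≤ g (n + 1) * g (n + 1) := (hlc n).trans_eq (sq _)
          _ ≤ g n * g (n + 1) := mul_le_mul_of_nonneg_right ih hpos.le
  · push Not at hdrop
    obtain ⟨N, hN⟩ := hfin
    exact ⟨N, fun j _ => hdrop j, fun j hj => by rw [hN j hj, hN (j + 1) (by omega)]⟩

end PF2

namespace Polynomial

section Semiring

variable {S : Type*} [Semiring S]

/-- Coefficients indexed by `ℤ`, so that index shifts in convolutions need no truncated
subtraction. -/
noncomputable def intCoeff (P : S[X]) (n : ℤ) : S := if 0 ≤ n then P.coeff n.toNat else 0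

@[simp]
theorem intCoeff_natCast (P : S[X]) (n : ℕ) : P.intCoeff n = P.coeff n := by
  simp [intCoeff]

theorem intCoeff_of_neg (P : S[X]) {n : ℤ} (hn : n < 0) : P.intCoeff n = 0 :=
  if_neg hn.not_ge

theorem intCoeff_mul (P Q : S[X]) {n k L M : ℤ} (hL : L ≤ k) (hM : n + k ≤ M) :
    (P * Q).intCoeff n = ∑ t ∈ Icc L M, P.intCoeff (t - k) * Q.intCoeff (n + k - t) := by
  rw [← sum_subset (Icc_subset_Icc hL hM) fun t _ ht => by
    rcases lt_or_ge (t - k) 0 with h | h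
    · rw [P.intCoeff_of_neg h, zero_mul]
    · rw [Q.intCoeff_of_neg (by grind), mul_zero]]
  rcases lt_or_ge n 0 with hn | hn
  · rw [intCoeff_of_neg _ hn, Icc_eq_empty (by omega), sum_empty]
  rw [intCoeff, if_pos hn, coeff_mul, Nat.sum_antidiagonal_eq_sum_range_succ_mk]
  refine sum_nbij' (fun i => i + k) (fun t => (t - k).toNat) ?_ ?_ ?_ ?_ ?_ <;>
    intro i hi <;> simp only [mem_range, mem_Icc] at hi ⊢
  · omega
  · omega
  · omega
  · omega
  · have h1 : (i : ℤ) + k - k = i := by ring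
    have h2 : n + k - (i + k) = ((n.toNat - i : ℕ) : ℤ) := by omega
    rw [h1, h2, intCoeff_natCast, intCoeff_natCast]

theorem intCoeff_geom_sum (m : ℕ) (n : ℤ) :
    (∑ i ∈ range m, (X : S[X]) ^ i).intCoeff n = if 0 ≤ n ∧ n < m then 1 else 0 := by
  simp only [intCoeff, finsetSum_coeff, coeff_X_pow, sum_ite_eq, mem_range]
  split_ifs <;> first | rfl | omega

end Semiring

theorem isPF2_intCoeff_geom_sum {R : Type*} [CommRing R] [LinearOrder R] [IsStrictOrderedRing R]
    (m : ℕ) : IsPF2_s19 (∑ i ∈ range m, (X : R[X]) ^ i).intCoeff where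
  nonneg n := by rw [intCoeff_geom_sum]; split_ifs <;> simp
  mul_le_mul u v huv := by
    simp only [intCoeff_geom_sum]
    split_ifs <;> first | omega | simp

end Polynomial

namespace IsPF2_s19

variable {R : Type*} [CommRing R] [LinearOrder R] {P : R[X]}

theorem coeff_nonneg (hP : IsPF2_s19 P.intCoeff) (k : ℕ) : 0 ≤ P.coeff k := by
  simpa using hP.nonneg k

theorem coeff_sub_one_mul_coeff_add_one_le (hP : IsPF2_s19 P.intCoeff) {k : ℕ} (hk : 1 ≤ k) :
    P.coeff (k - 1) * P.coeff (k + 1) ≤ P.coeff k ^ 2 := by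
  have h := hP.mul_le_mul k k le_rfl
  rwa [← Nat.cast_pred hk, ← Nat.cast_succ, intCoeff_natCast, intCoeff_natCast, intCoeff_natCast,
    ← sq] at h

variable [IsStrictOrderedRing R]

theorem intCoeff_mul {Q : R[X]} (hP : IsPF2_s19 P.intCoeff) (hQ : IsPF2_s19 Q.intCoeff) :
    IsPF2_s19 (P * Q).intCoeff where
  nonneg n := by
    rw [P.intCoeff_mul Q (k := 0) (M := max n 0) le_rfl (by omega)]
    exact sum_nonneg fun t _ => mul_nonneg (hP.nonneg _) (hQ.nonneg _)
  mul_le_mul u v huv := by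
    have window (n k : ℤ) (hk : 0 ≤ k) (hn : n + k ≤ v + 1) :=
      P.intCoeff_mul Q (L := 0) (M := v + 1) hk hn
    rw [window (u - 1) 1 (by omega) (by omega), window u 0 le_rfl (by omega),
      window v 1 (by omega) le_rfl, window (v + 1) 0 le_rfl (by omega)]
    simp only [sub_add_cancel, sub_zero, add_zero]
    exact hP.sum_mul_sum_le hQ huv _

theorem coeff_ne_zero_of_le_of_le (hP : IsPF2_s19 P.intCoeff) {i j l : ℕ} (hij : i ≤ j) (hjl : j ≤ l)
    (hi : P.coeff i ≠ 0) (hl : P.coeff l ≠ 0) : P.coeff j ≠ 0 := by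
  simpa using hP.ne_zero_of_le_of_le (i := i) (j := j) (l := l) (by omega) (by omega)
    (by simpa using hi) (by simpa using hl)

theorem exists_peak (hP : IsPF2_s19 P.intCoeff) :
    ∃ i, (∀ j, j < i → P.coeff j ≤ P.coeff (j + 1)) ∧ ∀ j, i ≤ j → P.coeff (j + 1) ≤ P.coeff j :=
  exists_peak_of_logConcave hP.coeff_nonneg
    (fun k => hP.coeff_sub_one_mul_coeff_add_one_le (k := k + 1) (by omega))
    (fun _ _ _ => hP.coeff_ne_zero_of_le_of_le)
    ⟨P.natDegree + 1, fun _ hn => coeff_eq_zero_of_natDegree_lt hn⟩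

end IsPF2_s19

theorem stmt19_general (a b d : ℕ) :
    (∀ k, 0 ≤ ((∑ i ∈ Finset.range (3 * d - 3 - a - b), (X : Polynomial ℝ) ^ i)
        * (∑ i ∈ Finset.range a, (X : Polynomial ℝ) ^ i)
        * (∑ i ∈ Finset.range b, (X : Polynomial ℝ) ^ i)).coeff k) ∧
    (∀ k, 1 ≤ k →
      ((∑ i ∈ Finset.range (3 * d - 3 - a - b), (X : Polynomial ℝ) ^ i)
          * (∑ i ∈ Finset.range a, (X : Polynomial ℝ) ^ i)
          * (∑ i ∈ Finset.range b, (X : Polynomial ℝ) ^ i)).coeff (k - 1)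
        * ((∑ i ∈ Finset.range (3 * d - 3 - a - b), (X : Polynomial ℝ) ^ i)
          * (∑ i ∈ Finset.range a, (X : Polynomial ℝ) ^ i)
          * (∑ i ∈ Finset.range b, (X : Polynomial ℝ) ^ i)).coeff (k + 1)
      ≤ (((∑ i ∈ Finset.range (3 * d - 3 - a - b), (X : Polynomial ℝ) ^ i)
          * (∑ i ∈ Finset.range a, (X : Polynomial ℝ) ^ i)
          * (∑ i ∈ Finset.range b, (X : Polynomial ℝ) ^ i)).coeff k) ^ 2) ∧
    (∀ i j l, i ≤ j → j ≤ l →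
      ((∑ i ∈ Finset.range (3 * d - 3 - a - b), (X : Polynomial ℝ) ^ i)
          * (∑ i ∈ Finset.range a, (X : Polynomial ℝ) ^ i)
          * (∑ i ∈ Finset.range b, (X : Polynomial ℝ) ^ i)).coeff i ≠ 0 →
      ((∑ i ∈ Finset.range (3 * d - 3 - a - b), (X : Polynomial ℝ) ^ i)
          * (∑ i ∈ Finset.range a, (X : Polynomial ℝ) ^ i)
          * (∑ i ∈ Finset.range b, (X : Polynomial ℝ) ^ i)).coeff l ≠ 0 →
      ((∑ i ∈ Finset.range (3 * d - 3 - a - b), (X : Polynomial ℝ) ^ i)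
          * (∑ i ∈ Finset.range a, (X : Polynomial ℝ) ^ i)
          * (∑ i ∈ Finset.range b, (X : Polynomial ℝ) ^ i)).coeff j ≠ 0) ∧
    (∃ i : ℕ, (∀ j, j < i →
        ((∑ i ∈ Finset.range (3 * d - 3 - a - b), (X : Polynomial ℝ) ^ i)
          * (∑ i ∈ Finset.range a, (X : Polynomial ℝ) ^ i)
          * (∑ i ∈ Finset.range b, (X : Polynomial ℝ) ^ i)).coeff j
        ≤ ((∑ i ∈ Finset.range (3 * d - 3 - a - b), (X : Polynomial ℝ) ^ i)
          * (∑ i ∈ Finset.range a, (X : Polynomial ℝ) ^ i)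
          * (∑ i ∈ Finset.range b, (X : Polynomial ℝ) ^ i)).coeff (j + 1)) ∧
      (∀ j, i ≤ j →
        ((∑ i ∈ Finset.range (3 * d - 3 - a - b), (X : Polynomial ℝ) ^ i)
          * (∑ i ∈ Finset.range a, (X : Polynomial ℝ) ^ i)
          * (∑ i ∈ Finset.range b, (X : Polynomial ℝ) ^ i)).coeff (j + 1)
        ≤ ((∑ i ∈ Finset.range (3 * d - 3 - a - b), (X : Polynomial ℝ) ^ i)
          * (∑ i ∈ Finset.range a, (X : Polynomial ℝ) ^ i)
          * (∑ i ∈ Finset.range b, (X : Polynomial ℝ) ^ i)).coeff j)) := by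
  have hD := ((isPF2_intCoeff_geom_sum (R := ℝ) (3 * d - 3 - a - b)).intCoeff_mul
    (isPF2_intCoeff_geom_sum a)).intCoeff_mul (isPF2_intCoeff_geom_sum b)
  exact ⟨hD.coeff_nonneg, fun _ => hD.coeff_sub_one_mul_coeff_add_one_le,
    fun _ _ _ => hD.coeff_ne_zero_of_le_of_le, hD.exists_peak⟩

/-- Let `d ≥ 2` and `1 ≤ a ≤ b < d` be integers, and set
`D(t) = ((1-t^{3d-3-a-b})/(1-t)) ((1-t^a)/(1-t)) ((1-t^b)/(1-t))`, a product of three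
polynomials of the form `1 + t + ⋯ + t^{m-1}`. Then the coefficient sequence of `D` is
nonnegative, log-concave, has no internal zeros, and is unimodal. -/
theorem stmt19 (a b d : ℕ) (hd : 2 ≤ d) (ha : 1 ≤ a) (hab : a ≤ b) (hbd : b < d) :
    (∀ k, 0 ≤ ((∑ i ∈ Finset.range (3 * d - 3 - a - b), (X : Polynomial ℝ) ^ i)
        * (∑ i ∈ Finset.range a, (X : Polynomial ℝ) ^ i)
        * (∑ i ∈ Finset.range b, (X : Polynomial ℝ) ^ i)).coeff k) ∧
    (∀ k, 1 ≤ k →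
      ((∑ i ∈ Finset.range (3 * d - 3 - a - b), (X : Polynomial ℝ) ^ i)
          * (∑ i ∈ Finset.range a, (X : Polynomial ℝ) ^ i)
          * (∑ i ∈ Finset.range b, (X : Polynomial ℝ) ^ i)).coeff (k - 1)
        * ((∑ i ∈ Finset.range (3 * d - 3 - a - b), (X : Polynomial ℝ) ^ i)
          * (∑ i ∈ Finset.range a, (X : Polynomial ℝ) ^ i)
          * (∑ i ∈ Finset.range b, (X : Polynomial ℝ) ^ i)).coeff (k + 1)
      ≤ (((∑ i ∈ Finset.range (3 * d - 3 - a - b), (X : Polynomial ℝ) ^ i)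
          * (∑ i ∈ Finset.range a, (X : Polynomial ℝ) ^ i)
          * (∑ i ∈ Finset.range b, (X : Polynomial ℝ) ^ i)).coeff k) ^ 2) ∧
    (∀ i j l, i ≤ j → j ≤ l →
      ((∑ i ∈ Finset.range (3 * d - 3 - a - b), (X : Polynomial ℝ) ^ i)
          * (∑ i ∈ Finset.range a, (X : Polynomial ℝ) ^ i)
          * (∑ i ∈ Finset.range b, (X : Polynomial ℝ) ^ i)).coeff i ≠ 0 →
      ((∑ i ∈ Finset.range (3 * d - 3 - a - b), (X : Polynomial ℝ) ^ i)
          * (∑ i ∈ Finset.range a, (X : Polynomial ℝ) ^ i)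
          * (∑ i ∈ Finset.range b, (X : Polynomial ℝ) ^ i)).coeff l ≠ 0 →
      ((∑ i ∈ Finset.range (3 * d - 3 - a - b), (X : Polynomial ℝ) ^ i)
          * (∑ i ∈ Finset.range a, (X : Polynomial ℝ) ^ i)
          * (∑ i ∈ Finset.range b, (X : Polynomial ℝ) ^ i)).coeff j ≠ 0) ∧
    (∃ i : ℕ, (∀ j, j < i →
        ((∑ i ∈ Finset.range (3 * d - 3 - a - b), (X : Polynomial ℝ) ^ i)
          * (∑ i ∈ Finset.range a, (X : Polynomial ℝ) ^ i)
          * (∑ i ∈ Finset.range b, (X : Polynomial ℝ) ^ i)).coeff j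
        ≤ ((∑ i ∈ Finset.range (3 * d - 3 - a - b), (X : Polynomial ℝ) ^ i)
          * (∑ i ∈ Finset.range a, (X : Polynomial ℝ) ^ i)
          * (∑ i ∈ Finset.range b, (X : Polynomial ℝ) ^ i)).coeff (j + 1)) ∧
      (∀ j, i ≤ j →
        ((∑ i ∈ Finset.range (3 * d - 3 - a - b), (X : Polynomial ℝ) ^ i)
          * (∑ i ∈ Finset.range a, (X : Polynomial ℝ) ^ i)
          * (∑ i ∈ Finset.range b, (X : Polynomial ℝ) ^ i)).coeff (j + 1)
        ≤ ((∑ i ∈ Finset.range (3 * d - 3 - a - b), (X : Polynomial ℝ) ^ i)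
          * (∑ i ∈ Finset.range a, (X : Polynomial ℝ) ^ i)
          * (∑ i ∈ Finset.range b, (X : Polynomial ℝ) ^ i)).coeff j)) :=
  stmt19_general a b d
end
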